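/- Let r ≥ 4 and let (V,ℬ) be an r-even-free triple packing. Then the set of indicator vectors of the blocks of ℬ is a (|V|, |ℬ|, 1, 2) X-code of constant weight three that is also a (|V|, |ℬ|, 3, 1) X-code and a (|V|, |ℬ|, r, 0) X-code. -/

import Mathlib

/-!
Two distinct blocks of a packing share at most one point, so a block meeting at most `m`
other blocks keeps at least `3 - m` private points. Hence a block avoided by two others always
keeps a coordinate of its own, which gives the `(1, 2)` property, and any `1 ≤ k ≤ 3` blocks have
at least `k (4 - k) ≥ 3` points of degree one. If all odd-degree points of such a configuration
`C` lay in another block `b`, these three points would fill `b`, so `C ∪ {b}` would be an even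
configuration with at most four blocks; this gives the `(3, 1)` property. The `(r, 0)` property
is `r`-even-freeness read coordinatewise.
-/

/-- An `(·,·,d,x)` X-code on coordinate set `ι`. -/
def IsXCode {ι : Type*} [Fintype ι] (d x : ℕ) (X : Finset (ι → ZMod 2)) : Prop :=
  ∀ S₁ S₂ : Finset (ι → ZMod 2), S₁ ⊆ X → S₂ ⊆ X → Disjoint S₁ S₂ →
    S₁.card ≤ x → 1 ≤ S₂.card → S₂.card ≤ d →
    ∃ j : ι, (∑ s ∈ S₂, s j) = 1 ∧ ∀ s ∈ S₁, s j = 0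

/-- The weight of a vector: its number of nonzero coordinates. -/
def wt {ι : Type*} [Fintype ι] (s : ι → ZMod 2) : ℕ :=
  (Finset.univ.filter fun j => s j ≠ 0).card

/-- A configuration is even if every point lies in an even number of its blocks. -/
def IsEvenConfig {V : Type*} [DecidableEq V] (C : Finset (Finset V)) : Prop :=
  ∀ p : V, Even (C.filter fun b => p ∈ b).card

open Finset

section PackingCode

variable {V : Type*} [DecidableEq V]

def indicatorVec (b : Finset V) : V → ZMod 2 := fun p => if p ∈ b then 1 else 0

def pointDegree (C : Finset (Finset V)) (p : V) : ℕ := (C.filter fun b => p ∈ b).card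

def IsEvenFree (B : Finset (Finset V)) (r : ℕ) : Prop :=
  ∀ C ⊆ B, C.Nonempty → C.card ≤ r → ¬ IsEvenConfig C

theorem indicatorVec_injective : Function.Injective (indicatorVec (V := V)) := by
  intro b c h
  ext p
  have hp := congrFun h p
  by_cases hb : p ∈ b <;> by_cases hc : p ∈ c <;> simp_all [indicatorVec]

theorem wt_indicatorVec [Fintype V] (b : Finset V) : wt (indicatorVec b) = b.card := by
  unfold wt indicatorVec
  congr 1
  ext p
  by_cases hp : p ∈ b <;> simp [hp]

theorem sum_indicatorVec_apply (C : Finset (Finset V)) (p : V) :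
    ∑ b ∈ C, indicatorVec b p = pointDegree C p := by
  simp only [indicatorVec, pointDegree, sum_boole]

theorem not_isEvenConfig_iff {C : Finset (Finset V)} :
    ¬ IsEvenConfig C ↔ ∃ p, Odd (pointDegree C p) := by
  simp only [IsEvenConfig, pointDegree, not_forall, Nat.not_even_iff_odd]

theorem IsEvenFree.mono {B : Finset (Finset V)} {r s : ℕ} (h : IsEvenFree B r) (hsr : s ≤ r) :
    IsEvenFree B s :=
  fun C hCB hC hs => h C hCB hC (hs.trans hsr)

theorem IsEvenFree.exists_odd_pointDegree {B C : Finset (Finset V)} {r : ℕ} (h : IsEvenFree B r)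
    (hCB : C ⊆ B) (h1 : 1 ≤ C.card) (hr : C.card ≤ r) : ∃ p, Odd (pointDegree C p) :=
  not_isEvenConfig_iff.1 (h C hCB (card_pos.1 h1) hr)

theorem pointDegree_insert {C : Finset (Finset V)} {b : Finset V} (hb : b ∉ C) (p : V) :
    pointDegree (insert b C) p = pointDegree C p + if p ∈ b then 1 else 0 := by
  unfold pointDegree
  rw [filter_insert]
  split_ifs
  · exact card_insert_of_notMem fun h => hb (mem_filter.1 h).1
  · rfl

theorem pointDegree_eq_one_of_mem_sdiff {C : Finset (Finset V)} {b : Finset V} (hb : b ∈ C)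
    {p : V} (hp : p ∈ b \ (C.erase b).biUnion id) : pointDegree C p = 1 := by
  rw [pointDegree, card_eq_one]
  refine ⟨b, eq_singleton_iff_unique_mem.2 ⟨mem_filter.2 ⟨hb, (mem_sdiff.1 hp).1⟩, ?_⟩⟩
  intro c hc
  by_contra hcb
  exact (mem_sdiff.1 hp).2 (mem_biUnion.2 ⟨c, mem_erase.2 ⟨hcb, (mem_filter.1 hc).1⟩,
    (mem_filter.1 hc).2⟩)

theorem pairwise_card_inter_le_one {B : Finset (Finset V)}
    (hpack : ∀ p : Finset V, p.card = 2 → (B.filter fun b => p ⊆ b).card ≤ 1) :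
    (B : Set (Finset V)).Pairwise fun b c => (b ∩ c).card ≤ 1 := by
  intro b hb c hc hbc
  by_contra! h
  obtain ⟨p, hpbc, hp⟩ := exists_subset_card_eq (Nat.succ_le_of_lt h)
  have hsub : ({b, c} : Finset (Finset V)) ⊆ B.filter fun d => p ⊆ d := by
    intro d hd
    rcases mem_insert.1 hd with rfl | hd
    · exact mem_filter.2 ⟨hb, hpbc.trans inter_subset_left⟩
    · rw [mem_singleton.1 hd]
      exact mem_filter.2 ⟨hc, hpbc.trans inter_subset_right⟩
  have := card_le_card hsub
  rw [card_pair hbc] at this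
  have := hpack p hp
  omega

theorem card_sub_card_le_card_sdiff_biUnion {b : Finset V} {D : Finset (Finset V)}
    (hD : ∀ c ∈ D, (b ∩ c).card ≤ 1) : b.card - D.card ≤ (b \ D.biUnion id).card := by
  have hmeet : (b ∩ D.biUnion id).card ≤ D.card := by
    rw [inter_biUnion]
    simpa using card_biUnion_le_card_mul D _ 1 hD
  have := card_sdiff_add_card_inter b (D.biUnion id)
  omega

theorem three_le_card_filter_pointDegree_eq_one {C : Finset (Finset V)}
    (hC3 : ∀ b ∈ C, b.card = 3) (hC : (C : Set (Finset V)).Pairwise fun b c => (b ∩ c).card ≤ 1)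
    (h1 : 1 ≤ C.card) (h3 : C.card ≤ 3) :
    3 ≤ ((C.biUnion id).filter fun p => pointDegree C p = 1).card := by
  set priv : Finset V → Finset V := fun b => b \ (C.erase b).biUnion id
  have hpriv : ∀ b ∈ C, 4 - C.card ≤ (priv b).card := by
    intro b hb
    have := card_sub_card_le_card_sdiff_biUnion (b := b) (D := C.erase b) fun c hc =>
      hC hb (mem_of_mem_erase hc) (ne_of_mem_erase hc).symm
    rw [card_erase_of_mem hb, hC3 b hb] at this
    change 4 - C.card ≤ (b \ (C.erase b).biUnion id).card
    omega
  have hdisj : (C : Set (Finset V)).PairwiseDisjoint priv := by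
    intro b hb c hc hbc
    refine disjoint_left.2 fun p hpb hpc => (mem_sdiff.1 hpb).2 ?_
    exact mem_biUnion.2 ⟨c, mem_erase.2 ⟨hbc.symm, hc⟩, (mem_sdiff.1 hpc).1⟩
  have hsub : C.biUnion priv ⊆ (C.biUnion id).filter fun p => pointDegree C p = 1 := by
    intro p hp
    obtain ⟨b, hb, hpb⟩ := mem_biUnion.1 hp
    exact mem_filter.2 ⟨mem_biUnion.2 ⟨b, hb, (mem_sdiff.1 hpb).1⟩,
      pointDegree_eq_one_of_mem_sdiff hb hpb⟩
  calc 3 ≤ C.card * (4 - C.card) := by interval_cases C.card <;> norm_num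
    _ = ∑ _b ∈ C, (4 - C.card) := by rw [sum_const, smul_eq_mul]
    _ ≤ ∑ b ∈ C, (priv b).card := sum_le_sum hpriv
    _ = (C.biUnion priv).card := (card_biUnion hdisj).symm
    _ ≤ _ := card_le_card hsub

theorem exists_odd_pointDegree_notMem {B : Finset (Finset V)} (hB3 : ∀ b ∈ B, b.card = 3)
    (hB : (B : Set (Finset V)).Pairwise fun b c => (b ∩ c).card ≤ 1)
    (hfree : IsEvenFree B 4) {C : Finset (Finset V)}
    (hCB : C ⊆ B) (h1 : 1 ≤ C.card) (h3 : C.card ≤ 3) {b : Finset V} (hb : b ∈ B)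
    (hbC : b ∉ C) : ∃ p, Odd (pointDegree C p) ∧ p ∉ b := by
  by_contra! hodd
  set P := (C.biUnion id).filter fun p => pointDegree C p = 1
  have hPb : P ⊆ b := fun p hp => hodd p (by rw [(mem_filter.1 hp).2]; exact odd_one)
  have hPeq : P = b := eq_of_subset_of_card_le hPb <| by
    rw [hB3 b hb]
    exact three_le_card_filter_pointDegree_eq_one (fun c hc => hB3 c (hCB hc))
      (hB.mono hCB) h1 h3
  have hmem : ∀ p, p ∈ b ↔ Odd (pointDegree C p) := fun p =>
    ⟨fun hp => by rw [← hPeq] at hp; rw [(mem_filter.1 hp).2]; exact odd_one, hodd p⟩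
  refine hfree (insert b C) (insert_subset hb hCB) (insert_nonempty b C)
    (by rw [card_insert_of_notMem hbC]; omega) fun p => ?_
  rw [← pointDegree, pointDegree_insert hbC]
  split_ifs with hpb
  · rw [Nat.even_add_one, Nat.not_even_iff_odd]
    exact (hmem p).1 hpb
  · rw [add_zero, ← Nat.not_odd_iff_even]
    exact mt (hmem p).2 hpb

theorem isXCode_image_indicatorVec [Fintype V] {B : Finset (Finset V)} {d x : ℕ}
    (h : ∀ C₁ ⊆ B, ∀ C₂ ⊆ B, Disjoint C₁ C₂ → C₁.card ≤ x → 1 ≤ C₂.card → C₂.card ≤ d →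
      ∃ p, Odd (pointDegree C₂ p) ∧ ∀ c ∈ C₁, p ∉ c) :
    IsXCode d x (B.image indicatorVec) := by
  intro S₁ S₂ hS₁ hS₂ hdisj hx h1 hd
  obtain ⟨C₁, hC₁, rfl⟩ := subset_image_iff.1 hS₁
  obtain ⟨C₂, hC₂, rfl⟩ := subset_image_iff.1 hS₂
  rw [disjoint_image indicatorVec_injective] at hdisj
  rw [card_image_of_injective _ indicatorVec_injective] at hx h1 hd
  obtain ⟨p, hodd, hp⟩ := h C₁ hC₁ C₂ hC₂ hdisj hx h1 hd
  refine ⟨p, ?_, ?_⟩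
  · rw [sum_image fun b _ c _ hbc => indicatorVec_injective hbc, sum_indicatorVec_apply]
    exact ZMod.natCast_eq_one_iff_odd.2 hodd
  · simp only [mem_image, forall_exists_index, and_imp]
    rintro _ c hc rfl
    simp [indicatorVec, hp c hc]

section XCode

variable [Fintype V] {B : Finset (Finset V)}

theorem IsEvenFree.isXCode_zero {r : ℕ} (hfree : IsEvenFree B r) :
    IsXCode r 0 (B.image indicatorVec) := by
  refine isXCode_image_indicatorVec fun C₁ _ C₂ hC₂ _ h0 h1 hr => ?_
  obtain ⟨p, hp⟩ := hfree.exists_odd_pointDegree hC₂ h1 hr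
  exact ⟨p, hp, by simp [card_eq_zero.1 (Nat.le_zero.1 h0)]⟩

variable (hB3 : ∀ b ∈ B, b.card = 3)
  (hB : (B : Set (Finset V)).Pairwise fun b c => (b ∩ c).card ≤ 1)
include hB3 hB

theorem isXCode_one_two : IsXCode 1 2 (B.image indicatorVec) := by
  refine isXCode_image_indicatorVec fun C₁ hC₁ C₂ hC₂ hdisj h2 h1 h1' => ?_
  obtain ⟨b, rfl⟩ := card_eq_one.1 (le_antisymm h1' h1)
  have hb := hC₂ (mem_singleton_self b)
  have hpriv := card_sub_card_le_card_sdiff_biUnion (b := b) (D := C₁) fun c hc =>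
    hB hb (hC₁ hc) fun hbc => disjoint_left.1 hdisj (hbc ▸ hc) (mem_singleton_self b)
  rw [hB3 b hb] at hpriv
  obtain ⟨p, hp⟩ := card_pos.1 (show 0 < (b \ C₁.biUnion id).card by omega)
  refine ⟨p, ?_, fun c hc hpc => (mem_sdiff.1 hp).2 (mem_biUnion.2 ⟨c, hc, hpc⟩)⟩
  rw [pointDegree, filter_singleton, if_pos (mem_sdiff.1 hp).1, card_singleton]
  exact odd_one

theorem isXCode_three_one (hfree : IsEvenFree B 4) : IsXCode 3 1 (B.image indicatorVec) := by
  refine isXCode_image_indicatorVec fun C₁ hC₁ C₂ hC₂ hdisj h1 h1' h3 => ?_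
  obtain ⟨b, hsub⟩ := card_le_one_iff_subset_singleton.1 h1
  rcases subset_singleton_iff.1 hsub with rfl | rfl
  · obtain ⟨p, hp⟩ := hfree.exists_odd_pointDegree hC₂ h1' (by omega)
    exact ⟨p, hp, by simp⟩
  · obtain ⟨p, hp, hpb⟩ := exists_odd_pointDegree_notMem hB3 hB hfree hC₂ h1' h3
      (hC₁ (mem_singleton_self b)) (disjoint_singleton_left.1 hdisj)
    exact ⟨p, hp, by simpa⟩

end XCode

end PackingCode

/-- For `r ≥ 4`, the block indicator vectors of an `r`-even-free triple packing
`(V, ℬ)` form a `(|V|, |ℬ|, 1, 2)` X-code of constant weight three that is also a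
`(|V|, |ℬ|, 3, 1)` X-code and a `(|V|, |ℬ|, r, 0)` X-code. -/
theorem rEvenFree_packing_xcode {V : Type*} [Fintype V] [DecidableEq V]
    (r : ℕ) (hr : 4 ≤ r) (B : Finset (Finset V))
    (hblock : ∀ b ∈ B, b.card = 3)
    (hpack : ∀ p : Finset V, p.card = 2 → (B.filter fun b => p ⊆ b).card ≤ 1)
    (heven : ∀ C ⊆ B, C.Nonempty → C.card ≤ r → ¬ IsEvenConfig C) :
    (B.image fun b => fun p : V => if p ∈ b then (1 : ZMod 2) else 0).card = B.card ∧
      (∀ s ∈ B.image fun b => fun p : V => if p ∈ b then (1 : ZMod 2) else 0,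
        wt s = 3) ∧
      IsXCode 1 2 (B.image fun b => fun p : V => if p ∈ b then (1 : ZMod 2) else 0) ∧
      IsXCode 3 1 (B.image fun b => fun p : V => if p ∈ b then (1 : ZMod 2) else 0) ∧
      IsXCode r 0 (B.image fun b => fun p : V => if p ∈ b then (1 : ZMod 2) else 0) := by
  change (B.image indicatorVec).card = B.card ∧ (∀ s ∈ B.image indicatorVec, wt s = 3) ∧
    IsXCode 1 2 (B.image indicatorVec) ∧ IsXCode 3 1 (B.image indicatorVec) ∧
    IsXCode r 0 (B.image indicatorVec)
  have hfree : IsEvenFree B r := heven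
  have hB := pairwise_card_inter_le_one hpack
  refine ⟨card_image_of_injective _ indicatorVec_injective, ?_, isXCode_one_two hblock hB,
    isXCode_three_one hblock hB (hfree.mono hr), hfree.isXCode_zero⟩
  simp only [mem_image, forall_exists_index, and_imp]
  rintro _ b hb rfl
  rw [wt_indicatorVec, hblock b hb]
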